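/- arXiv:0903.0192 — 10 statements merged into one kernel-verified Lean document; each statement's English description precedes it below -/
import Mathlib

section
/- Let V be a finite nonempty set and let S be a nonempty finite set of functions V → V that is closed under composition. Let K ⊆ S be a nonempty subset that is a two-sided ideal of S (for all k ∈ K and W ∈ S, both composites 'first W then k' and 'first k then W' lie in K) and that is contained in every nonempty two-sided ideal of S (so K is the kernel of S). Then for all x, y ∈ V: x ≡_S y under the stability relation (i.e. for every W₁ ∈ S there exists W₂ ∈ S with W₂(W₁(x)) = W₂(W₁(y))) if and only if k(x) = k(y) for every k ∈ K. -/
/-!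
If `x ≡_S y`, a single `s ∈ S` identifies `W x` with `W y` for `W = id` and every `W ∈ S`:
since `S` is finite, the pairs can be collapsed one at a time, each time post-composing the
current collapser `s` with some `W₂` that collapses the next pair `(s (W x), s (W y))`.
The elements of `S` with this property form a nonempty two-sided ideal, which therefore
contains the kernel. Conversely, if every `k ∈ K` identifies `x` with `y`, then so does
`k ∘ W₁ ∈ K` for `W₁ ∈ S`, so any `k ∈ K` can serve as `W₂`.
-/

namespace TransformationSemigroup

variable {V : Type*}

def IsStable (S : Set (V → V)) (x y : V) : Prop :=
  ∀ W₁ ∈ S, ∃ W₂ ∈ S, W₂ (W₁ x) = W₂ (W₁ y)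

def IsTwoSidedIdeal (S I : Set (V → V)) : Prop :=
  I ⊆ S ∧ ∀ k ∈ I, ∀ W ∈ S, k ∘ W ∈ I ∧ W ∘ k ∈ I

def CollapsesImages (s : V → V) (T : Set (V → V)) (x y : V) : Prop :=
  ∀ W ∈ insert id T, s (W x) = s (W y)

variable {S T : Set (V → V)} {s : V → V} {x y : V}

theorem CollapsesImages.comp_left (h : CollapsesImages s T x y) (f : V → V) :
    CollapsesImages (f ∘ s) T x y :=
  fun W hW => congrArg f (h W hW)

theorem CollapsesImages.insert {W t : V → V} (h : CollapsesImages s T x y)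
    (ht : t (s (W x)) = t (s (W y))) : CollapsesImages (t ∘ s) (insert W T) x y := by
  intro W' hW'
  rcases Set.mem_insert_iff.mp hW' with rfl | hW'
  · exact congrArg t (h id (Set.mem_insert _ _))
  rcases Set.mem_insert_iff.mp hW' with rfl | hW'
  · exact ht
  · exact congrArg t (h W' (Set.mem_insert_of_mem _ hW'))

theorem CollapsesImages.comp_right (hS : ∀ f ∈ S, ∀ g ∈ S, g ∘ f ∈ S)
    (h : CollapsesImages s S x y) {W : V → V} (hW : W ∈ S) :
    CollapsesImages (s ∘ W) S x y := by
  intro W' hW'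
  rcases Set.mem_insert_iff.mp hW' with rfl | hW'
  · exact h W (Set.mem_insert_of_mem _ hW)
  · exact h (W ∘ W') (Set.mem_insert_of_mem _ (hS W' hW' W hW))

theorem IsStable.exists_collapsesImages [Finite V] (hS : ∀ f ∈ S, ∀ g ∈ S, g ∘ f ∈ S)
    (hSne : S.Nonempty) (hst : IsStable S x y) : ∃ s ∈ S, CollapsesImages s S x y := by
  refine Set.Finite.induction_on_subset
    (motive := fun T _ => ∃ s ∈ S, CollapsesImages s T x y) S S.toFinite ?_ ?_
  · obtain ⟨W₁, hW₁⟩ := hSne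
    obtain ⟨W₂, hW₂, hcol⟩ := hst W₁ hW₁
    refine ⟨W₂ ∘ W₁, hS W₁ hW₁ W₂ hW₂, ?_⟩
    simpa [CollapsesImages] using hcol
  · rintro W T hW - - ⟨s, hs, hsT⟩
    obtain ⟨W₂, hW₂, hcol⟩ := hst (s ∘ W) (hS W hW s hs)
    exact ⟨W₂ ∘ s, hS s hs W₂ hW₂, hsT.insert hcol⟩

theorem isTwoSidedIdeal_collapsers (hS : ∀ f ∈ S, ∀ g ∈ S, g ∘ f ∈ S) :
    IsTwoSidedIdeal S {s | s ∈ S ∧ CollapsesImages s S x y} :=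
  ⟨fun _ hs => hs.1, fun _ ⟨hk, hkcol⟩ W hW =>
    ⟨⟨hS W hW _ hk, hkcol.comp_right hS hW⟩, ⟨hS _ hk W hW, hkcol.comp_left W⟩⟩⟩

theorem IsStable.kernel_collapse [Finite V] {K : Set (V → V)}
    (hS : ∀ f ∈ S, ∀ g ∈ S, g ∘ f ∈ S) (hSne : S.Nonempty)
    (hKmin : ∀ I, IsTwoSidedIdeal S I → I.Nonempty → K ⊆ I)
    (hst : IsStable S x y) : ∀ k ∈ K, k x = k y := by
  obtain ⟨s, hs, hscol⟩ := hst.exists_collapsesImages hS hSne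
  intro k hk
  exact (hKmin _ (isTwoSidedIdeal_collapsers hS) ⟨s, hs, hscol⟩ hk).2 id (Set.mem_insert _ _)

theorem isStable_of_kernel_collapse {K : Set (V → V)} (hKS : K ⊆ S) (hKne : K.Nonempty)
    (hKright : ∀ k ∈ K, ∀ W ∈ S, k ∘ W ∈ K) (hcol : ∀ k ∈ K, k x = k y) :
    IsStable S x y := by
  obtain ⟨k, hk⟩ := hKne
  exact fun W₁ hW₁ => ⟨k, hKS hk, hcol (k ∘ W₁) (hKright k hk W₁ hW₁)⟩

end TransformationSemigroup

open TransformationSemigroup in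
theorem stability_iff_kernel_collapse_general {V : Type} [Fintype V]
    (S : Set (V → V)) (hSne : S.Nonempty)
    (hSclosed : ∀ f ∈ S, ∀ g ∈ S, g ∘ f ∈ S)
    (K : Set (V → V)) (hKS : K ⊆ S) (hKne : K.Nonempty)
    (hKideal : ∀ k ∈ K, ∀ W ∈ S, k ∘ W ∈ K ∧ W ∘ k ∈ K)
    (hKmin : ∀ I : Set (V → V), I ⊆ S → I.Nonempty →
      (∀ k ∈ I, ∀ W ∈ S, k ∘ W ∈ I ∧ W ∘ k ∈ I) → K ⊆ I)
    (x y : V) :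
    (∀ W₁ ∈ S, ∃ W₂ ∈ S, W₂ (W₁ x) = W₂ (W₁ y)) ↔ (∀ k ∈ K, k x = k y) :=
  ⟨IsStable.kernel_collapse hSclosed hSne fun I hI hIne => hKmin I hI.1 hIne hI.2,
    isStable_of_kernel_collapse hKS hKne fun k hk W hW => (hKideal k hk W hW).1⟩

/-- The stability relation of a finite transformation semigroup `S` coincides with
the relation "collapsed by every element of the kernel `K`".
Functions act on the right: a product `W₁W₂` means "first apply `W₁`, then `W₂`",
so `k ∘ W` is "first `W` then `k`". -/
theorem stability_iff_kernel_collapse {V : Type} [Fintype V] [Nonempty V]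
    (S : Set (V → V)) (hSne : S.Nonempty)
    (hSclosed : ∀ f ∈ S, ∀ g ∈ S, g ∘ f ∈ S)
    (K : Set (V → V)) (hKS : K ⊆ S) (hKne : K.Nonempty)
    (hKideal : ∀ k ∈ K, ∀ W ∈ S, k ∘ W ∈ K ∧ W ∘ k ∈ K)
    (hKmin : ∀ I : Set (V → V), I ⊆ S → I.Nonempty →
      (∀ k ∈ I, ∀ W ∈ S, k ∘ W ∈ I ∧ W ∘ k ∈ I) → K ⊆ I)
    (x y : V) :
    (∀ W₁ ∈ S, ∃ W₂ ∈ S, W₂ (W₁ x) = W₂ (W₁ y)) ↔ (∀ k ∈ K, k x = k y) :=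
  stability_iff_kernel_collapse_general S hSne hSclosed K hKS hKne hKideal hKmin x y
end

section
/- Let V be a finite nonempty set and let S be a nonempty finite set of functions V → V closed under composition, with kernel K ⊆ S (a nonempty two-sided ideal of S contained in every nonempty two-sided ideal of S). For W ∈ S, the set B = W(V) (the range of W) is an F-clique — meaning that for every pair of distinct x, y ∈ B and every U ∈ S one has U(x) ≠ U(y) — if and only if W ∈ K. -/
/-!
If `W` lies in the kernel `K`, then `W` has minimal rank `|range W|` in `S`, because the
elements of `S` of rank at most `r` form an ideal, which contains `K` as soon as it is
nonempty. A word `U` merging two points of `range W` would give `U ∘ W` a smaller rank.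

Conversely, if no word merges points of `range W`, pick `k ∈ K` and let `g = W ∘ k ∈ K`.
It maps `range W` injectively into itself, so some positive iterate `gⁿ ∈ K` is the
identity on `range W`; hence `W = gⁿ ∘ W ∈ K`.
-/

open Set Function

variable {α : Type*}

theorem exists_pos_iterate_eqOn_id_of_injOn [Finite α] {f : α → α} {s : Set α}
    (hinj : InjOn f s) (hmaps : MapsTo f s s) : ∃ n, 0 < n ∧ EqOn f^[n] id s := by
  obtain ⟨i, j, hne, heq⟩ := Finite.exists_ne_map_eq_of_infinite (fun n : ℕ => f^[n])
  wlog hlt : i < j generalizing i j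
  · exact this j i hne.symm heq.symm (hne.symm.lt_of_le (not_lt.1 hlt))
  refine ⟨j - i, by omega, fun x hx => ?_⟩
  -- `f^[i]` is injective on `s` and `f^[i] (f^[j - i] x) = f^[j] x = f^[i] x`.
  apply hinj.iterate hmaps i (hmaps.iterate _ hx) hx
  rw [← iterate_add_apply, Nat.add_sub_cancel' hlt.le]
  exact congrFun heq.symm x

theorem iterate_mem_of_comp_mem {K : Set (α → α)} (hK : ∀ a ∈ K, ∀ b ∈ K, a ∘ b ∈ K)
    {f : α → α} (hf : f ∈ K) {n : ℕ} (hn : 0 < n) : f^[n] ∈ K := by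
  induction n, hn using Nat.le_induction with
  | base => simpa using hf
  | succ n _ ih => simpa only [iterate_succ] using hK _ ih f hf

theorem Set.ncard_image_lt_of_not_injOn {β : Type*} {f : α → β} {s : Set α}
    (h : ¬InjOn f s) (hs : s.Finite := by toFinite_tac) : (f '' s).ncard < s.ncard :=
  (ncard_image_le hs).lt_of_ne fun heq => h (injOn_of_ncard_image_eq heq hs)

section Kernel

variable {S K : Set (α → α)}

theorem ncard_range_le_of_mem_kernel [Finite α]
    (hSclosed : ∀ f ∈ S, ∀ g ∈ S, g ∘ f ∈ S)
    (hKmin : ∀ I : Set (α → α), I ⊆ S → I.Nonempty →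
      (∀ k ∈ I, ∀ W ∈ S, k ∘ W ∈ I ∧ W ∘ k ∈ I) → K ⊆ I)
    {W : α → α} (hW : W ∈ K) {f : α → α} (hf : f ∈ S) :
    (range W).ncard ≤ (range f).ncard := by
  let I := {g ∈ S | (range g).ncard ≤ (range f).ncard}
  have hideal : ∀ k ∈ I, ∀ W' ∈ S, k ∘ W' ∈ I ∧ W' ∘ k ∈ I := by
    rintro k ⟨hkS, hk⟩ W' hW'
    refine ⟨⟨hSclosed W' hW' k hkS, ?_⟩, ⟨hSclosed k hkS W' hW', ?_⟩⟩
    · exact (ncard_le_ncard (range_comp_subset_range W' k)).trans hk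
    · rw [range_comp]
      exact (ncard_image_le).trans hk
  exact (hKmin I (fun _ hg => hg.1) ⟨f, hf, le_rfl⟩ hideal hW).2

theorem mem_kernel_of_forall_injOn_range [Finite α] (hKS : K ⊆ S) (hKne : K.Nonempty)
    (hKideal : ∀ k ∈ K, ∀ W ∈ S, k ∘ W ∈ K ∧ W ∘ k ∈ K)
    {W : α → α} (hW : W ∈ S) (hinj : ∀ U ∈ S, InjOn U (range W)) : W ∈ K := by
  obtain ⟨k, hk⟩ := hKne
  have hgK : W ∘ k ∈ K := (hKideal k hk W hW).2
  have hmaps : MapsTo (W ∘ k) (range W) (range W) := fun x _ => mem_range_self (k x)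
  obtain ⟨n, hn, hid⟩ := exists_pos_iterate_eqOn_id_of_injOn (hinj _ (hKS hgK)) hmaps
  have hiterK : (W ∘ k)^[n] ∈ K :=
    iterate_mem_of_comp_mem (fun a ha b hb => (hKideal a ha b (hKS hb)).1) hgK hn
  have hfix : (W ∘ k)^[n] ∘ W = W := funext fun x => hid (mem_range_self x)
  simpa only [hfix] using (hKideal _ hiterK W hW).1

end Kernel

theorem fClique_iff_mem_kernel_general {V : Type} [Fintype V]
    (S : Set (V → V))
    (hSclosed : ∀ f ∈ S, ∀ g ∈ S, g ∘ f ∈ S)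
    (K : Set (V → V)) (hKS : K ⊆ S) (hKne : K.Nonempty)
    (hKideal : ∀ k ∈ K, ∀ W ∈ S, k ∘ W ∈ K ∧ W ∘ k ∈ K)
    (hKmin : ∀ I : Set (V → V), I ⊆ S → I.Nonempty →
      (∀ k ∈ I, ∀ W ∈ S, k ∘ W ∈ I ∧ W ∘ k ∈ I) → K ⊆ I)
    (W : V → V) (hW : W ∈ S) :
    (∀ x ∈ Set.range W, ∀ y ∈ Set.range W, x ≠ y → ∀ U ∈ S, U x ≠ U y) ↔ W ∈ K := by
  have hclique : (∀ x ∈ range W, ∀ y ∈ range W, x ≠ y → ∀ U ∈ S, U x ≠ U y) ↔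
      ∀ U ∈ S, InjOn U (range W) :=
    ⟨fun h U hU x hx y hy hxy => by_contra fun hne => h x hx y hy hne U hU hxy,
      fun h x hx y hy hne U hU hxy => hne (h U hU hx hy hxy)⟩
  rw [hclique]
  refine ⟨mem_kernel_of_forall_injOn_range hKS hKne hKideal hW, fun hWK U hU => ?_⟩
  by_contra hnot
  have hrank := ncard_range_le_of_mem_kernel hSclosed hKmin hWK (hSclosed W hW U hU)
  rw [range_comp] at hrank
  exact hrank.not_gt (ncard_image_lt_of_not_injOn hnot)

/-- A range `B = W(V)` of an element `W` of a finite transformation semigroup `S`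
with kernel `K` is an F-clique (no two distinct points of `B` are ever merged by a
word of `S`) if and only if `W` belongs to the kernel `K`. -/
theorem fClique_iff_mem_kernel {V : Type} [Fintype V] [Nonempty V]
    (S : Set (V → V)) (hSne : S.Nonempty)
    (hSclosed : ∀ f ∈ S, ∀ g ∈ S, g ∘ f ∈ S)
    (K : Set (V → V)) (hKS : K ⊆ S) (hKne : K.Nonempty)
    (hKideal : ∀ k ∈ K, ∀ W ∈ S, k ∘ W ∈ K ∧ W ∘ k ∈ K)
    (hKmin : ∀ I : Set (V → V), I ⊆ S → I.Nonempty →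
      (∀ k ∈ I, ∀ W ∈ S, k ∘ W ∈ I ∧ W ∘ k ∈ I) → K ⊆ I)
    (W : V → V) (hW : W ∈ S) :
    (∀ x ∈ Set.range W, ∀ y ∈ Set.range W, x ≠ y → ∀ U ∈ S, U x ≠ U y) ↔ W ∈ K :=
  fClique_iff_mem_kernel_general S hSclosed K hKS hKne hKideal hKmin W hW
end

section
/- Let G = (V, E) be a finite strongly connected digraph (E ⊆ V × V, and for all u, v ∈ V there is a directed walk of positive length from u to v) whose period — the greatest common divisor of the lengths of all closed directed walks in G — equals t, and suppose there is a surjective map P : V → ℤ/tℤ such that (v,w) ∈ E implies P(w) = P(v) + 1. Let ≈ be an equivalence relation on V each of whose classes is contained in a single fiber of P (x ≈ y implies P(x) = P(y)), and let Q be the quotient digraph on the set of equivalence classes, with an edge from class [u] to class [v] if and only if there exist u' ≈ u and v' ≈ v with (u',v') ∈ E. Then the greatest common divisor of the lengths of all closed directed walks in Q also equals t. -/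
/-!
The periodic partition `P` is constant on classes, so it descends to the quotient, where it
still increases by one along every edge; hence every closed walk of the quotient has length
divisible by `t`. Conversely, every closed walk of `G` projects to a closed walk of the quotient
of the same length, so a common divisor of the quotient's closed-walk lengths divides `per(G) = t`.
-/

/-- `walkN E m u v` : there is a directed walk of length `m` from `u` to `v`
in the digraph with edge relation `E`. -/
def walkN {α : Type*} (E : α → α → Prop) : ℕ → α → α → Prop
  | 0, u, v => u = v
  | m + 1, u, v => ∃ w, E u w ∧ walkN E m w v

/-- The edge relation of the quotient digraph: there is an edge from class `a`
to class `b` iff there are representatives `u` of `a` and `v` of `b` with an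
edge `(u, v)` in the original digraph. -/
def quotEdge {V : Type*} (s : Setoid V) (E : V → V → Prop) :
    Quotient s → Quotient s → Prop :=
  fun a b => ∃ u v : V, E u v ∧ Quotient.mk s u = a ∧ Quotient.mk s v = b

theorem walkN.map {α β : Type*} {E : α → α → Prop} {F : β → β → Prop} (f : α → β)
    (hf : ∀ u v, E u v → F (f u) (f v)) :
    ∀ {m : ℕ} {u v : α}, walkN E m u v → walkN F m (f u) (f v)
  | 0, _, _, h => congrArg f h
  | _ + 1, _, _, ⟨w, huw, hwv⟩ => ⟨f w, hf _ _ huw, hwv.map f hf⟩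

theorem walkN.eq_add_length {α R : Type*} [AddCommMonoidWithOne R] {E : α → α → Prop}
    (P : α → R) (hP : ∀ u v, E u v → P v = P u + 1) :
    ∀ {m : ℕ} {u v : α}, walkN E m u v → P v = P u + m
  | 0, _, _, h => by rw [h, Nat.cast_zero, add_zero]
  | m + 1, u, v, ⟨w, huw, hwv⟩ => by
    rw [walkN.eq_add_length P hP hwv, hP u w huw, Nat.cast_succ, add_assoc, add_comm 1]

theorem walkN.dvd_length_of_self {α : Type*} {E : α → α → Prop} {t : ℕ}
    (P : α → ZMod t) (hP : ∀ u v, E u v → P v = P u + 1) {m : ℕ} {a : α}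
    (h : walkN E m a a) : t ∣ m := by
  have hm := walkN.eq_add_length P hP h
  rwa [left_eq_add, ZMod.natCast_eq_zero_iff] at hm

theorem quotEdge_lift {V β : Type*} {s : Setoid V} {E : V → V → Prop} {R : β → β → Prop}
    (f : V → β) (hs : ∀ x y, s.r x y → f x = f y) (hf : ∀ u v, E u v → R (f u) (f v))
    {a b : Quotient s} (h : quotEdge s E a b) : R (Quotient.lift f hs a) (Quotient.lift f hs b) := by
  obtain ⟨u, v, huv, rfl, rfl⟩ := h
  exact hf u v huv

theorem period_quotient_eq_period_general {V : Type}
    (E : V → V → Prop)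
    (t : ℕ)
    (hgcd : ∀ s : ℕ, (∀ m : ℕ, 1 ≤ m → (∃ v : V, walkN E m v v) → s ∣ m) → s ∣ t)
    (P : V → ZMod t)
    (hPE : ∀ v w : V, E v w → P w = P v + 1)
    (s : Setoid V) (hs : ∀ x y : V, s.r x y → P x = P y) :
    (∀ m : ℕ, 1 ≤ m → (∃ a : Quotient s, walkN (quotEdge s E) m a a) → t ∣ m) ∧
    (∀ r : ℕ, (∀ m : ℕ, 1 ≤ m →
        (∃ a : Quotient s, walkN (quotEdge s E) m a a) → r ∣ m) → r ∣ t) := by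
  constructor
  · rintro m - ⟨a, ha⟩
    exact ha.dvd_length_of_self (Quotient.lift P hs) fun _ _ =>
      quotEdge_lift (R := fun x y => y = x + 1) P hs hPE
  · intro r hr
    refine hgcd r fun m hm ⟨v, hv⟩ => hr m hm ⟨Quotient.mk s v, ?_⟩
    exact hv.map (Quotient.mk s) fun u w huw => ⟨u, w, huw, rfl, rfl⟩

/-- If `G` is a finite strongly connected digraph of period `t` (the gcd of the
lengths of its closed walks), with periodic partition `P : V → ℤ/tℤ`, and `≈` is
an equivalence relation refining the periodic partition, then the quotient
digraph also has period `t`. -/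
theorem period_quotient_eq_period {V : Type} [Fintype V] [Nonempty V]
    (E : V → V → Prop)
    (hsc : ∀ u v : V, ∃ m : ℕ, 1 ≤ m ∧ walkN E m u v)
    (t : ℕ)
    (hdvd : ∀ m : ℕ, 1 ≤ m → (∃ v : V, walkN E m v v) → t ∣ m)
    (hgcd : ∀ s : ℕ, (∀ m : ℕ, 1 ≤ m → (∃ v : V, walkN E m v v) → s ∣ m) → s ∣ t)
    (P : V → ZMod t) (hPsurj : Function.Surjective P)
    (hPE : ∀ v w : V, E v w → P w = P v + 1)
    (s : Setoid V) (hs : ∀ x y : V, s.r x y → P x = P y) :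
    (∀ m : ℕ, 1 ≤ m → (∃ a : Quotient s, walkN (quotEdge s E) m a a) → t ∣ m) ∧
    (∀ r : ℕ, (∀ m : ℕ, 1 ≤ m →
        (∃ a : Quotient s, walkN (quotEdge s E) m a a) → r ∣ m) → r ∣ t) :=
  period_quotient_eq_period_general E t hgcd P hPE s hs
end

section
/- Let V be a finite set, t ≥ 1, and P : V → ℤ/tℤ a map. Let R₁, …, R_d : V → V be functions such that P(R_i(v)) = P(v) + 1 for every i and every v ∈ V, and let S be the semigroup generated by R₁, …, R_d under composition. If x, y ∈ V are equivalent under the stability relation of S (i.e. for every W₁ ∈ S there exists W₂ ∈ S with W₂(W₁(x)) = W₂(W₁(y))), then P(x) = P(y). -/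
/-! Every element of the semigroup generated by the `R i` shifts `P` by a constant, and a map
shifting `P` by a constant can only merge points with equal `P`-value. Stability applied to
`W₁ = R₀` yields such a map `W₂ ∘ R₀` merging `x` and `y`. -/

section ShiftMaps

variable {V G : Type*} [AddSemigroup G]

def shiftSubsemigroup (P : V → G) : Subsemigroup (Function.End V) where
  carrier := {W | ∃ n : G, ∀ v, P (W v) = P v + n}
  mul_mem' := by
    rintro a b ⟨m, hm⟩ ⟨n, hn⟩
    exact ⟨n + m, fun v => show P (a (b v)) = P v + (n + m) by rw [hm, hn, add_assoc]⟩

theorem eq_of_mem_shiftSubsemigroup [IsRightCancelAdd G] {P : V → G} {W : Function.End V}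
    (hW : W ∈ shiftSubsemigroup P) {x y : V} (hxy : W x = W y) : P x = P y := by
  obtain ⟨n, hn⟩ := hW
  exact add_right_cancel (by rw [← hn, ← hn, hxy])

end ShiftMaps

theorem stability_class_subset_periodic_class_general {V : Type}
    (d t : ℕ) (hd : 1 ≤ d)
    (P : V → ZMod t) (R : Fin d → V → V)
    (hR : ∀ (i : Fin d) (v : V), P (R i v) = P v + 1)
    (x y : V)
    (hstab : ∀ W₁ ∈ (Subsemigroup.closure (Set.range R) : Subsemigroup (Function.End V)),
      ∃ W₂ ∈ (Subsemigroup.closure (Set.range R) : Subsemigroup (Function.End V)),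
        (W₂ : V → V) ((W₁ : V → V) x) = (W₂ : V → V) ((W₁ : V → V) y)) :
    P x = P y := by
  set S : Subsemigroup (Function.End V) := Subsemigroup.closure (Set.range R)
  have hshift : S ≤ shiftSubsemigroup P :=
    Subsemigroup.closure_le.2 (by rintro _ ⟨i, rfl⟩; exact ⟨1, hR i⟩)
  have hR₀ : (R ⟨0, hd⟩ : Function.End V) ∈ S := Subsemigroup.subset_closure ⟨_, rfl⟩
  obtain ⟨W₂, hW₂, hsync⟩ := hstab _ hR₀
  exact eq_of_mem_shiftSubsemigroup (hshift (mul_mem hW₂ hR₀)) hsync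

/-- Each stability class of a coloring semigroup of a periodic digraph is
contained in a single periodic partition class: if `x` and `y` are stable
(under the semigroup generated by colors `R₁, …, R_d`, each of which shifts
the periodic class by one) then `P x = P y`. -/
theorem stability_class_subset_periodic_class {V : Type} [Fintype V]
    (d t : ℕ) (hd : 1 ≤ d) (ht : 1 ≤ t)
    (P : V → ZMod t) (R : Fin d → V → V)
    (hR : ∀ (i : Fin d) (v : V), P (R i v) = P v + 1)
    (x y : V)
    (hstab : ∀ W₁ ∈ (Subsemigroup.closure (Set.range R) : Subsemigroup (Function.End V)),
      ∃ W₂ ∈ (Subsemigroup.closure (Set.range R) : Subsemigroup (Function.End V)),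
        (W₂ : V → V) ((W₁ : V → V) x) = (W₂ : V → V) ((W₁ : V → V) y)) :
    P x = P y :=
  stability_class_subset_periodic_class_general d t hd P R hR x y hstab
end

section
/- Let A be an n×n real stochastic matrix (all entries nonnegative, every row sums to 1) that is irreducible and aperiodic, i.e. primitive: there exists m ≥ 1 such that all entries of A^m are strictly positive. If X is an n×n real symmetric matrix with nonnegative entries and zero diagonal satisfying A X Aᵀ = X, then X = 0. -/
/-!
Iterating `A X Aᵀ = X` gives `Aᵐ X (Aᵐ)ᵀ = X` for the exponent `m` at which `Aᵐ` is entrywise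
positive. The diagonal entry `0 = X i i = ∑ k l, (Aᵐ) i k X k l (Aᵐ) i l` is then a sum of
nonnegative terms whose coefficients are all positive, so every entry of `X` vanishes.
-/

open Matrix BigOperators

namespace Matrix

variable {ι κ R : Type*} [Fintype ι]

theorem pow_mul_mul_transpose_pow_eq_of_mul_mul_transpose_eq [DecidableEq ι] [CommSemiring R]
    {A X : Matrix ι ι R} (hfix : A * X * Aᵀ = X) (k : ℕ) : A ^ k * X * (A ^ k)ᵀ = X := by
  induction k with
  | zero => simp
  | succ k ih =>
    calc A ^ (k + 1) * X * (A ^ (k + 1))ᵀ = A ^ k * (A * X * Aᵀ) * (A ^ k)ᵀ := by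
          simp only [pow_succ, transpose_mul, Matrix.mul_assoc]
      _ = X := by rw [hfix, ih]

theorem eq_zero_of_mul_mul_transpose_apply_self_eq_zero [CommRing R] [LinearOrder R]
    [IsStrictOrderedRing R] {B : Matrix κ ι R} {X : Matrix ι ι R} {i : κ}
    (hB : ∀ k, 0 < B i k) (hX : ∀ k l, 0 ≤ X k l) (h : (B * X * Bᵀ) i i = 0) : X = 0 := by
  have hterm : ∀ k l, 0 ≤ B i k * X k l * B i l := fun k l =>
    mul_nonneg (mul_nonneg (hB k).le (hX k l)) (hB l).le
  have hsum : ∑ l, ∑ k, B i k * X k l * B i l = 0 := by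
    simpa only [mul_apply, transpose_apply, Finset.sum_mul] using h
  ext k l
  have hinner := (Finset.sum_eq_zero_iff_of_nonneg fun l _ =>
    Finset.sum_nonneg fun k _ => hterm k l).mp hsum l (Finset.mem_univ l)
  have hkl := (Finset.sum_eq_zero_iff_of_nonneg fun k _ => hterm k l).mp hinner k
    (Finset.mem_univ k)
  simpa [(hB k).ne', (hB l).ne'] using hkl

end Matrix

theorem level2_fixed_point_aperiodic_general {n : ℕ} (A : Matrix (Fin n) (Fin n) ℝ)
    (hprim : ∃ m : ℕ, 1 ≤ m ∧ ∀ i j, 0 < (A ^ m) i j)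
    (X : Matrix (Fin n) (Fin n) ℝ)
    (hXnn : ∀ i j, 0 ≤ X i j) (hdiag : ∀ i, X i i = 0)
    (hfix : A * X * Aᵀ = X) :
    X = 0 := by
  obtain ⟨m, -, hpos⟩ := hprim
  ext i j
  have hdiag_iter : (A ^ m * X * (A ^ m)ᵀ) i i = 0 := by
    rw [pow_mul_mul_transpose_pow_eq_of_mul_mul_transpose_eq hfix m, hdiag i]
  rw [eq_zero_of_mul_mul_transpose_apply_self_eq_zero (hpos i) hXnn hdiag_iter]

/-- For a primitive (irreducible aperiodic) stochastic matrix `A`, the only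
symmetric matrix `X` with nonnegative entries and zero diagonal satisfying
`A X Aᵀ = X` is `X = 0`. -/
theorem level2_fixed_point_aperiodic {n : ℕ} (A : Matrix (Fin n) (Fin n) ℝ)
    (hAnn : ∀ i j, 0 ≤ A i j) (hrow : ∀ i, ∑ j, A i j = 1)
    (hprim : ∃ m : ℕ, 1 ≤ m ∧ ∀ i j, 0 < (A ^ m) i j)
    (X : Matrix (Fin n) (Fin n) ℝ) (hsym : X.IsSymm)
    (hXnn : ∀ i j, 0 ≤ X i j) (hdiag : ∀ i, X i i = 0)
    (hfix : A * X * Aᵀ = X) :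
    X = 0 :=
  level2_fixed_point_aperiodic_general A hprim X hXnn hdiag hfix
end

section
/- Let A be an n×n real stochastic matrix (all entries nonnegative, every row sums to 1), let t ≥ 1, and let P be a map from the index set {1,…,n} to ℤ/tℤ such that A_{ij} > 0 implies P(j) = P(i) + 1. For i, j define dist(i,j) = min(a, t − a), where a ∈ {0,…,t−1} is the representative of P(j) − P(i) in ℤ/tℤ, and for an integer δ ≥ 0 let X^{(δ)} be the n×n 0–1 matrix with X^{(δ)}_{ij} = 1 if dist(i,j) = δ and 0 otherwise. Then for every δ ≥ 0, A X^{(δ)} Aᵀ = X^{(δ)}. -/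
/-! Both factors `A` shift the periodic class by `+1`, so every pair `(k, l)` contributing to
`(A X⁽δ⁾ Aᵀ)ᵢⱼ` has `P l - P k = P j - P i`, hence `X⁽δ⁾ₖₗ = X⁽δ⁾ᵢⱼ`; unit row sums then
make the weighted sum equal to `X⁽δ⁾ᵢⱼ`. -/

open Matrix BigOperators

/-- The circular distance between the periodic classes of `i` and `j`:
`min (a, t - a)` where `a ∈ {0, …, t-1}` represents `P j - P i` in `ℤ/tℤ`. -/
def cdist {n t : ℕ} (P : Fin n → ZMod t) (i j : Fin n) : ℕ :=
  min (P j - P i).val (t - (P j - P i).val)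

/-- The 0-1 indicator matrix `X⁽δ⁾` of the relation `dist(i,j) = δ`. -/
def indMat {n t : ℕ} (P : Fin n → ZMod t) (δ : ℕ) : Matrix (Fin n) (Fin n) ℝ :=
  Matrix.of fun i j => if cdist P i j = δ then 1 else 0

theorem Matrix.mul_mul_transpose_apply_eq_of_support {ι R : Type*} [Fintype ι] [CommSemiring R]
    {A M : Matrix ι ι R} (hrow : ∀ i, ∑ j, A i j = 1) {i j : ι}
    (hM : ∀ k l, A i k ≠ 0 → A j l ≠ 0 → M k l = M i j) :
    (A * M * Aᵀ) i j = M i j := by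
  have hterm : ∀ k l, A i k * M k l * A j l = A i k * M i j * A j l := by
    intro k l
    by_cases hk : A i k = 0
    · simp [hk]
    by_cases hl : A j l = 0
    · simp [hl]
    rw [hM k l hk hl]
  calc (A * M * Aᵀ) i j = ∑ l, ∑ k, A i k * M k l * A j l := by
        simp only [mul_apply, transpose_apply, Finset.sum_mul]
    _ = ∑ l, ∑ k, A i k * M i j * A j l := by simp only [hterm]
    _ = M i j := by
        rw [← Finset.sum_comm]
        simp only [← Finset.mul_sum, ← Finset.sum_mul, hrow, one_mul, mul_one]

theorem cdist_eq_of_sub_eq {n t : ℕ} {P : Fin n → ZMod t} {i j k l : Fin n}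
    (h : P l - P k = P j - P i) : cdist P k l = cdist P i j := by
  rw [cdist, cdist, h]

theorem level2_fixes_indicators_general {n t : ℕ}
    (A : Matrix (Fin n) (Fin n) ℝ)
    (hAnn : ∀ i j, 0 ≤ A i j) (hrow : ∀ i, ∑ j, A i j = 1)
    (P : Fin n → ZMod t) (hP : ∀ i j, 0 < A i j → P j = P i + 1)
    (δ : ℕ) :
    A * indMat P δ * Aᵀ = indMat P δ := by
  ext i j
  refine mul_mul_transpose_apply_eq_of_support hrow fun k l hik hjl => ?_
  have hk := hP i k ((hAnn i k).lt_of_ne' hik)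
  have hl := hP j l ((hAnn j l).lt_of_ne' hjl)
  have hd : cdist P k l = cdist P i j := cdist_eq_of_sub_eq (by rw [hk, hl]; ring)
  simp only [indMat, of_apply, hd]

/-- For a stochastic matrix `A` with periodic partition `P`, each indicator
matrix `X⁽δ⁾` of a distance class is fixed by the level 2 action:
`A X⁽δ⁾ Aᵀ = X⁽δ⁾`. -/
theorem level2_fixes_indicators {n t : ℕ} (ht : 1 ≤ t)
    (A : Matrix (Fin n) (Fin n) ℝ)
    (hAnn : ∀ i j, 0 ≤ A i j) (hrow : ∀ i, ∑ j, A i j = 1)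
    (P : Fin n → ZMod t) (hP : ∀ i j, 0 < A i j → P j = P i + 1)
    (δ : ℕ) :
    A * indMat P δ * Aᵀ = indMat P δ :=
  level2_fixes_indicators_general A hAnn hrow P hP δ
end

section
/- Let A be an irreducible n×n real stochastic matrix (all entries nonnegative, every row sums to 1, and for all i, j there exists m ≥ 1 with (A^m)_{ij} > 0) of period t, with surjective periodic partition P : {1,…,n} → ℤ/tℤ (A_{ij} > 0 implies P(j) = P(i) + 1), where t is the exact period in the sense that there exists m ≥ 1 such that (A^{mt})_{ij} > 0 whenever P(i) = P(j). Let X be an n×n symmetric matrix with nonnegative entries satisfying A X Aᵀ = X. Then X is constant on each distance class: for all indices i, j, i₀, j₀ with dist(i,j) = dist(i₀,j₀), one has X_{ij} = X_{i₀j₀}. -/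
open Matrix BigOperators

/-- For an irreducible stochastic matrix `A` of exact period `t` with periodic
partition `P`, any nonnegative symmetric solution of `A X Aᵀ = X` is constant
on each distance class. -/
theorem level2_solution_constant_on_distance_classes {n t : ℕ} (ht : 1 ≤ t)
    (A : Matrix (Fin n) (Fin n) ℝ)
    (hAnn : ∀ i j, 0 ≤ A i j) (hrow : ∀ i, ∑ j, A i j = 1)
    (hirr : ∀ i j, ∃ m : ℕ, 1 ≤ m ∧ 0 < (A ^ m) i j)
    (P : Fin n → ZMod t) (hPsurj : Function.Surjective P)
    (hP : ∀ i j, 0 < A i j → P j = P i + 1)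
    (hexact : ∃ m : ℕ, 1 ≤ m ∧ ∀ i j, P i = P j → 0 < (A ^ (m * t)) i j)
    (X : Matrix (Fin n) (Fin n) ℝ) (hsym : X.IsSymm)
    (hXnn : ∀ i j, 0 ≤ X i j)
    (hfix : A * X * Aᵀ = X)
    (i j i₀ j₀ : Fin n) (hd : cdist P i j = cdist P i₀ j₀) :
    X i j = X i₀ j₀ := by
  haveI : NeZero t := ⟨by omega⟩
  -- entries of powers are nonnegative
  have hpnn : ∀ (s : ℕ) (u v : Fin n), 0 ≤ (A ^ s) u v := by
    intro s
    induction s with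
    | zero =>
      intro u v
      by_cases h : u = v <;> simp [Matrix.one_apply, h]
    | succ s ih =>
      intro u v
      rw [pow_succ, mul_apply]
      exact Finset.sum_nonneg fun l _ => mul_nonneg (ih u l) (hAnn l v)
  -- rows of powers sum to 1
  have hprow : ∀ (s : ℕ) (u : Fin n), ∑ v, (A ^ s) u v = 1 := by
    intro s
    induction s with
    | zero => intro u; simp [Matrix.one_apply]
    | succ s ih =>
      intro u
      simp only [pow_succ, mul_apply]
      rw [Finset.sum_comm]
      simp_rw [← Finset.mul_sum, hrow, mul_one]
      exact ih u
  -- positivity of a power entry forces the class shift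
  have hshift : ∀ (s : ℕ) (u k : Fin n), 0 < (A ^ s) u k → P k = P u + (s : ZMod t) := by
    intro s
    induction s with
    | zero =>
      intro u k h
      by_cases huk : u = k
      · simp [huk]
      · simp [Matrix.one_apply, huk] at h
    | succ s ih =>
      intro u k h
      rw [pow_succ, mul_apply] at h
      have hex : ∃ l ∈ (Finset.univ : Finset (Fin n)), 0 < (A ^ s) u l * A l k := by
        by_contra hc
        push_neg at hc
        have : ∑ l, (A ^ s) u l * A l k ≤ 0 := Finset.sum_nonpos fun l hl => hc l hl
        linarith
      obtain ⟨l, _, hl⟩ := hex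
      rcases mul_pos_iff.mp hl with ⟨h1, h2⟩ | ⟨h1, h2⟩
      · have hpl := ih u l h1
        have hpk := hP l k h2
        rw [hpk, hpl]
        push_cast
        ring
      · exact absurd h1 (not_lt.mpr (hpnn s u l))
  -- fixed point of all powers
  have hfixpow : ∀ (s : ℕ), A ^ s * X * (A ^ s)ᵀ = X := by
    intro s
    induction s with
    | zero => simp
    | succ s ih =>
      rw [pow_succ', transpose_mul]
      have : A * A ^ s * X * ((A ^ s)ᵀ * Aᵀ) = A * (A ^ s * X * (A ^ s)ᵀ) * Aᵀ := by
        simp [Matrix.mul_assoc]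
      rw [this, ih, hfix]
  -- entrywise expansion
  have hBXB : ∀ (s : ℕ) (u v : Fin n),
      X u v = ∑ k, ∑ l, (A ^ s) u k * X k l * (A ^ s) v l := by
    intro s u v
    conv_lhs => rw [← hfixpow s]
    simp only [mul_apply, transpose_apply, Finset.sum_mul]
    rw [Finset.sum_comm]
  obtain ⟨m, hm1, hm⟩ := hexact
  -- support of the exact power
  have hBsupp : ∀ u k : Fin n, 0 < (A ^ (m * t)) u k → P k = P u := by
    intro u k h
    have := hshift (m * t) u k h
    rw [this]
    push_cast [ZMod.natCast_self]
    ring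
  -- constancy on classes
  have lemA : ∀ u v u' v' : Fin n, P u = P u' → P v = P v' → X u v = X u' v' := by
    intro u v u' v' hu hv
    classical
    set S : Finset (Fin n × Fin n) :=
      Finset.univ.filter (fun p : Fin n × Fin n => P p.1 = P u ∧ P p.2 = P v) with hS
    have hmemuv : (u, v) ∈ S := by simp [hS]
    obtain ⟨⟨r, s⟩, hrsS, hmax⟩ := S.exists_max_image (fun p => X p.1 p.2) ⟨(u, v), hmemuv⟩
    have hrS : P r = P u ∧ P s = P v := by simpa [hS] using hrsS
    have key : ∀ p ∈ S, X p.1 p.2 = X r s := by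
      intro p hp
      by_contra hne
      have hlt : X p.1 p.2 < X r s := lt_of_le_of_ne (hmax p hp) hne
      have hpS : P p.1 = P u ∧ P p.2 = P v := by simpa [hS] using hp
      have hle : ∀ q ∈ (Finset.univ ×ˢ Finset.univ : Finset (Fin n × Fin n)),
          (A ^ (m * t)) r q.1 * X q.1 q.2 * (A ^ (m * t)) s q.2 ≤
          (A ^ (m * t)) r q.1 * X r s * (A ^ (m * t)) s q.2 := by
        intro q _
        rcases eq_or_lt_of_le (hpnn (m * t) r q.1) with h1 | h1
        · rw [← h1]; simp
        rcases eq_or_lt_of_le (hpnn (m * t) s q.2) with h2 | h2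
        · rw [← h2]; simp
        have hk := hBsupp r q.1 h1
        have hl := hBsupp s q.2 h2
        have hqin : X q.1 q.2 ≤ X r s := by
          have : q ∈ S := by
            simp [hS, hk, hl, hrS.1, hrS.2]
          exact hmax q this
        exact mul_le_mul_of_nonneg_right
          (mul_le_mul_of_nonneg_left hqin (le_of_lt h1)) (le_of_lt h2)
      have hbr : 0 < (A ^ (m * t)) r p.1 := hm r p.1 (hrS.1.trans hpS.1.symm)
      have hbs : 0 < (A ^ (m * t)) s p.2 := hm s p.2 (hrS.2.trans hpS.2.symm)
      have hstrict : (A ^ (m * t)) r p.1 * X p.1 p.2 * (A ^ (m * t)) s p.2 <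
          (A ^ (m * t)) r p.1 * X r s * (A ^ (m * t)) s p.2 :=
        mul_lt_mul_of_pos_right (mul_lt_mul_of_pos_left hlt hbr) hbs
      have hsum := Finset.sum_lt_sum hle ⟨p, by simp, hstrict⟩
      have h1 : ∑ q ∈ (Finset.univ ×ˢ Finset.univ : Finset (Fin n × Fin n)),
          (A ^ (m * t)) r q.1 * X q.1 q.2 * (A ^ (m * t)) s q.2 = X r s := by
        rw [Finset.sum_product]
        exact (hBXB (m * t) r s).symm
      have h2 : ∑ q ∈ (Finset.univ ×ˢ Finset.univ : Finset (Fin n × Fin n)),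
          (A ^ (m * t)) r q.1 * X r s * (A ^ (m * t)) s q.2 = X r s := by
        rw [Finset.sum_product]
        simp_rw [← Finset.mul_sum, hprow, mul_one, ← Finset.sum_mul, hprow, one_mul]
      rw [h1, h2] at hsum
      exact lt_irrefl _ hsum
    have e1 : X u v = X r s := key (u, v) hmemuv
    have e2 : X u' v' = X r s := key (u', v') (by simp [hS, hu.symm, hv.symm])
    rw [e1, e2]
  -- one-step shift
  have lemB : ∀ u v u' v' : Fin n, P u' = P u + 1 → P v' = P v + 1 → X u v = X u' v' := by
    intro u v u' v' hu hv
    have hexp := hBXB 1 u v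
    simp only [pow_one] at hexp
    rw [hexp]
    have : ∀ k l : Fin n, A u k * X k l * A v l = A u k * X u' v' * A v l := by
      intro k l
      rcases eq_or_lt_of_le (hAnn u k) with h1 | h1
      · rw [← h1]; simp
      rcases eq_or_lt_of_le (hAnn v l) with h2 | h2
      · rw [← h2]; simp
      have hk : P k = P u' := by rw [hP u k h1, hu]
      have hl : P l = P v' := by rw [hP v l h2, hv]
      rw [lemA k l u' v' hk hl]
    simp_rw [this, ← Finset.mul_sum, hrow, mul_one, ← Finset.sum_mul, hrow, one_mul]
  -- shift by any natural number
  have shiftN : ∀ (c : ℕ) (u v u' v' : Fin n),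
      P u' = P u + (c : ZMod t) → P v' = P v + (c : ZMod t) → X u v = X u' v' := by
    intro c
    induction c with
    | zero =>
      intro u v u' v' hu hv
      simp only [Nat.cast_zero, add_zero] at hu hv
      exact lemA u v u' v' hu.symm hv.symm
    | succ c ih =>
      intro u v u' v' hu hv
      obtain ⟨p, hp⟩ := hPsurj (P u + (c : ZMod t))
      obtain ⟨q, hq⟩ := hPsurj (P v + (c : ZMod t))
      have h1 : X u v = X p q := ih u v p q hp hq
      have h2 : X p q = X u' v' := by
        refine lemB p q u' v' ?_ ?_
        · rw [hu, hp]; push_cast; ring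
        · rw [hv, hq]; push_cast; ring
      rw [h1, h2]
  have hXsym : ∀ u v : Fin n, X u v = X v u := by
    intro u v
    have := congrFun (congrFun hsym v) u
    simpa [Matrix.transpose_apply] using this
  -- final case analysis on the circular distance
  unfold cdist at hd
  set a := (P j - P i).val with ha_def
  set b := (P j₀ - P i₀).val with hb_def
  have ha : a < t := ZMod.val_lt _
  have hb : b < t := ZMod.val_lt _
  have hcase : b = a ∨ a + b = t := by omega
  have hcast_a : ((a : ℕ) : ZMod t) = P j - P i := ZMod.natCast_rightInverse _
  have hcast_b : ((b : ℕ) : ZMod t) = P j₀ - P i₀ := ZMod.natCast_rightInverse _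
  rcases hcase with hba | hab
  · -- same difference
    have hδ : P j₀ - P i₀ = P j - P i := by
      rw [← hcast_a, ← hcast_b, hba]
    set c := P i₀ - P i with hc
    have hcv : ((c.val : ℕ) : ZMod t) = c := ZMod.natCast_rightInverse _
    refine shiftN c.val i j i₀ j₀ ?_ ?_
    · rw [hcv, hc]; ring
    · rw [hcv, hc]; linear_combination hδ
  · -- opposite difference
    have h0 : ((a + b : ℕ) : ZMod t) = 0 := by rw [hab]; exact ZMod.natCast_self t
    have hneg : (P j - P i) + (P j₀ - P i₀) = 0 := by
      rw [← hcast_a, ← hcast_b, ← Nat.cast_add]; exact h0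
    rw [hXsym i j]
    set c := P i₀ - P j with hc
    have hcv : ((c.val : ℕ) : ZMod t) = c := ZMod.natCast_rightInverse _
    refine shiftN c.val j i i₀ j₀ ?_ ?_
    · rw [hcv, hc]; ring
    · rw [hcv, hc]; linear_combination hneg
end

section
/- Let A be an irreducible n×n real stochastic matrix of period t, with surjective periodic partition P : {1,…,n} → ℤ/tℤ (A_{ij} > 0 implies P(j) = P(i) + 1), where t is the exact period in the sense that there exists m ≥ 1 such that (A^{mt})_{ij} > 0 whenever P(i) = P(j). Let X be an n×n symmetric matrix with nonnegative entries satisfying A X Aᵀ = X, and let δ ≥ 0 be such that X^{(δ)} ≠ 0. Set c = tr(X X^{(δ)}) / tr((X^{(δ)})²). Then every entry of X − c X^{(δ)} is nonnegative. -/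
open Matrix BigOperators

/-! `X` is harmonic for each pair chain `(i, j) ↦ (c, d)` with weights `(A ^ k) i c * (A ^ k) j d`.
For `k = m t` the chain keeps each index in its periodic class and reaches all of it, so a maximum
principle makes `X` constant on each pair of classes. For `k = s` it shifts both classes by `s`, so
`X i j` depends only on `P j - P i`, and by symmetry of `X` only on the circular distance. Hence
`X = c` on the support of `X⁽δ⁾`, and `X - c X⁽δ⁾` is `X` off that support and `0` on it. -/

namespace Matrix

variable {ι R : Type*} [Fintype ι]

theorem mul_mul_transpose_apply [CommSemiring R] (B X : Matrix ι ι R) (i j : ι) :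
    (B * X * Bᵀ) i j = ∑ p : ι × ι, B i p.1 * B j p.2 * X p.1 p.2 := by
  simp only [mul_apply, transpose_apply, Finset.sum_mul, Fintype.sum_prod_type]
  rw [Finset.sum_comm]
  exact Finset.sum_congr rfl fun c _ => Finset.sum_congr rfl fun d _ => by ring

theorem trace_mul_eq_mul_trace_mul_self [CommSemiring R] {X Y : Matrix ι ι R} (hY : Y.IsSymm)
    (hidem : ∀ i j, Y i j * Y i j = Y i j) {v : R} (h : ∀ i j, Y i j ≠ 0 → X i j = v) :
    trace (X * Y) = v * trace (Y * Y) := by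
  simp only [trace, diag, mul_apply, Finset.mul_sum]
  refine Finset.sum_congr rfl fun i _ => Finset.sum_congr rfl fun j _ => ?_
  by_cases hji : Y j i = 0
  · simp [hji]
  · rw [h i j (hY.apply i j ▸ hji), hY.apply i j, hidem]

theorem sum_apply_mul_apply_eq_one [Semiring R] {B : Matrix ι ι R} (hB : ∀ i, ∑ j, B i j = 1)
    (i j : ι) : ∑ p : ι × ι, B i p.1 * B j p.2 = 1 := by
  rw [Fintype.sum_prod_type, ← Finset.sum_mul_sum, hB, hB, one_mul]

theorem apply_eq_of_forall_support [CommSemiring R] {B X : Matrix ι ι R}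
    (hB : ∀ i, ∑ j, B i j = 1) (hX : B * X * Bᵀ = X) {i j : ι} {v : R}
    (h : ∀ c d, B i c ≠ 0 → B j d ≠ 0 → X c d = v) : X i j = v := by
  rw [← hX, mul_mul_transpose_apply]
  calc ∑ p : ι × ι, B i p.1 * B j p.2 * X p.1 p.2 = ∑ p : ι × ι, B i p.1 * B j p.2 * v := by
        refine Finset.sum_congr rfl fun p _ => ?_
        by_cases hp : B i p.1 * B j p.2 = 0
        · rw [hp, zero_mul, zero_mul]
        · rw [h _ _ (left_ne_zero_of_mul hp) (right_ne_zero_of_mul hp)]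
    _ = v := by rw [← Finset.sum_mul, sum_apply_mul_apply_eq_one hB, one_mul]

variable [DecidableEq ι]

theorem pow_mul_mul_transpose_pow [CommSemiring R] {A X : Matrix ι ι R}
    (h : A * X * Aᵀ = X) (m : ℕ) : A ^ m * X * (A ^ m)ᵀ = X := by
  induction m with
  | zero => simp
  | succ m ih =>
    calc A ^ (m + 1) * X * (A ^ (m + 1))ᵀ = A ^ m * (A * X * Aᵀ) * (A ^ m)ᵀ := by
          simp only [pow_succ, transpose_mul, Matrix.mul_assoc]
      _ = X := by rw [h, ih]

theorem eq_add_of_pow_apply_ne_zero [Semiring R] {G : Type*} [AddMonoidWithOne G]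
    {A : Matrix ι ι R} {P : ι → G} (hP : ∀ i j, A i j ≠ 0 → P j = P i + 1) (m : ℕ) {i j : ι}
    (h : (A ^ m) i j ≠ 0) : P j = P i + m := by
  induction m generalizing j with
  | zero =>
    obtain rfl : i = j := by_contra fun hij => h (one_apply_ne hij)
    simp
  | succ m ih =>
    rw [pow_succ, mul_apply] at h
    obtain ⟨k, -, hk⟩ := Finset.exists_ne_zero_of_sum_ne_zero h
    rw [hP k j (right_ne_zero_of_mul hk), ih (left_ne_zero_of_mul hk), Nat.cast_succ, add_assoc]

variable {B X : Matrix ι ι ℝ}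

theorem apply_eq_of_forall_support_le (hB : B ∈ rowStochastic ℝ ι) (hX : B * X * Bᵀ = X)
    {i j : ι} (h : ∀ c d, B i c ≠ 0 → B j d ≠ 0 → X c d ≤ X i j) {c d : ι} (hc : B i c ≠ 0)
    (hd : B j d ≠ 0) : X c d = X i j := by
  have hle : ∀ p ∈ (Finset.univ : Finset (ι × ι)),
      B i p.1 * B j p.2 * X p.1 p.2 ≤ B i p.1 * B j p.2 * X i j := by
    intro p _
    by_cases hp : B i p.1 * B j p.2 = 0
    · rw [hp, zero_mul, zero_mul]
    · exact mul_le_mul_of_nonneg_left (h _ _ (left_ne_zero_of_mul hp) (right_ne_zero_of_mul hp))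
        (mul_nonneg (nonneg_of_mem_rowStochastic hB) (nonneg_of_mem_rowStochastic hB))
  have hsum : ∑ p : ι × ι, B i p.1 * B j p.2 * X p.1 p.2 =
      ∑ p : ι × ι, B i p.1 * B j p.2 * X i j := by
    rw [← Finset.sum_mul, sum_apply_mul_apply_eq_one (sum_row_of_mem_rowStochastic hB), one_mul,
      ← mul_mul_transpose_apply, hX]
  exact mul_left_cancel₀ (mul_ne_zero hc hd)
    ((Finset.sum_eq_sum_iff_of_le hle).1 hsum (c, d) (Finset.mem_univ _))

theorem apply_eq_of_class_eq {α : Type*} {P : ι → α} (hB : B ∈ rowStochastic ℝ ι)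
    (hX : B * X * Bᵀ = X) (hsupp : ∀ i c, B i c ≠ 0 ↔ P c = P i) {i j k l : ι}
    (hk : P k = P i) (hl : P l = P j) : X k l = X i j := by
  classical
  obtain ⟨⟨k₀, l₀⟩, hmem, hmax⟩ := Finset.exists_max_image
    (Finset.univ.filter fun p : ι × ι => P p.1 = P i ∧ P p.2 = P j) (fun p => X p.1 p.2)
    ⟨(i, j), by simp⟩
  simp only [Finset.mem_filter, Finset.mem_univ, true_and] at hmem
  have hconst : ∀ c d, P c = P i → P d = P j → X c d = X k₀ l₀ := fun c d hc hd =>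
    apply_eq_of_forall_support_le hB hX
      (fun c' d' hc' hd' => hmax (c', d') (by
        simp [(hsupp _ _).1 hc', (hsupp _ _).1 hd', hmem.1, hmem.2]))
      ((hsupp _ _).2 (hc.trans hmem.1.symm)) ((hsupp _ _).2 (hd.trans hmem.2.symm))
  rw [hconst k l hk hl, hconst i j rfl rfl]

theorem apply_eq_of_sub_eq {t : ℕ} [NeZero t] {A : Matrix ι ι ℝ} {P : ι → ZMod t}
    (hA : A ∈ rowStochastic ℝ ι) (hX : A * X * Aᵀ = X) (hP : ∀ i j, A i j ≠ 0 → P j = P i + 1)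
    (hclass : ∀ i j k l, P k = P i → P l = P j → X k l = X i j) {i j p q : ι}
    (h : P q - P p = P j - P i) : X i j = X p q := by
  set s := (P p - P i).val
  have hs : (s : ZMod t) = P p - P i := ZMod.natCast_zmod_val _
  refine apply_eq_of_forall_support (sum_row_of_mem_rowStochastic (pow_mem hA s))
    (pow_mul_mul_transpose_pow hX s)
    fun c d hc hd => hclass p q c d ?_ ?_
  · rw [eq_add_of_pow_apply_ne_zero hP s hc, hs, add_sub_cancel]
  · rw [eq_add_of_pow_apply_ne_zero hP s hd, hs]
    linear_combination -h

end Matrix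

open Matrix

section CircularDistance

variable {n t : ℕ} {P : Fin n → ZMod t} {δ : ℕ}

theorem indMat_apply_ne_zero_iff {i j : Fin n} : indMat P δ i j ≠ 0 ↔ cdist P i j = δ := by
  simp [indMat]

theorem indMat_apply_mul_self (i j : Fin n) :
    indMat P δ i j * indMat P δ i j = indMat P δ i j := by
  by_cases h : cdist P i j = δ <;> simp [indMat, h]

theorem exists_cdist_eq_of_indMat_ne_zero (h : indMat P δ ≠ 0) : ∃ i j, cdist P i j = δ := by
  by_contra! hne
  exact h (ext fun i j => by simp [indMat, hne i j])

variable [NeZero t]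

theorem cdist_eq_natAbs_valMinAbs (i j : Fin n) : cdist P i j = (P j - P i).valMinAbs.natAbs :=
  (ZMod.valMinAbs_natAbs_eq_min _).symm

theorem cdist_eq_cdist_iff {i j p q : Fin n} :
    cdist P i j = cdist P p q ↔ P j - P i = P q - P p ∨ P j - P i = -(P q - P p) := by
  rw [cdist_eq_natAbs_valMinAbs, cdist_eq_natAbs_valMinAbs,
    ZMod.natAbs_valMinAbs_eq_natAbs_valMinAbs]

theorem cdist_comm (i j : Fin n) : cdist P j i = cdist P i j :=
  cdist_eq_cdist_iff.2 (Or.inr (neg_sub _ _).symm)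

theorem indMat_isSymm (P : Fin n → ZMod t) (δ : ℕ) : (indMat P δ).IsSymm := by
  ext i j
  simp [indMat, cdist_comm]

theorem trace_indMat_mul_self_ne_zero (h : indMat P δ ≠ 0) :
    trace (indMat P δ * indMat P δ) ≠ 0 := by
  simpa [conjTranspose_eq_transpose_of_trivial, (indMat_isSymm P δ).eq] using
    mt trace_conjTranspose_mul_self_eq_zero_iff.1 h

theorem apply_eq_of_cdist_eq {A X : Matrix (Fin n) (Fin n) ℝ} (hA : A ∈ rowStochastic ℝ (Fin n))
    (hX : A * X * Aᵀ = X) (hsym : X.IsSymm) (hP : ∀ i j, A i j ≠ 0 → P j = P i + 1)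
    (hclass : ∀ i j k l, P k = P i → P l = P j → X k l = X i j) {i j p q : Fin n}
    (h : cdist P i j = cdist P p q) : X i j = X p q := by
  rcases cdist_eq_cdist_iff.1 h with h | h
  · exact apply_eq_of_sub_eq hA hX hP hclass h.symm
  · rw [← hsym.apply i j]
    exact apply_eq_of_sub_eq hA hX hP hclass (by linear_combination h)

end CircularDistance

theorem level2_solution_sub_projection_nonneg_general {n t : ℕ} (ht : 1 ≤ t)
    (A : Matrix (Fin n) (Fin n) ℝ)
    (hAnn : ∀ i j, 0 ≤ A i j) (hrow : ∀ i, ∑ j, A i j = 1)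
    (P : Fin n → ZMod t)
    (hP : ∀ i j, 0 < A i j → P j = P i + 1)
    (hexact : ∃ m : ℕ, 1 ≤ m ∧ ∀ i j, P i = P j → 0 < (A ^ (m * t)) i j)
    (X : Matrix (Fin n) (Fin n) ℝ) (hsym : X.IsSymm)
    (hXnn : ∀ i j, 0 ≤ X i j)
    (hfix : A * X * Aᵀ = X)
    (δ : ℕ) (hδ : indMat P δ ≠ 0) :
    ∀ i j, 0 ≤ (X - (Matrix.trace (X * indMat P δ) /
      Matrix.trace (indMat P δ * indMat P δ)) • indMat P δ) i j := by
  have : NeZero t := ⟨by omega⟩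
  have hA : A ∈ rowStochastic ℝ (Fin n) := mem_rowStochastic_iff_sum.2 ⟨hAnn, hrow⟩
  have hP' : ∀ i j, A i j ≠ 0 → P j = P i + 1 := fun i j h => hP i j ((hAnn i j).lt_of_ne' h)
  obtain ⟨m, -, hpos⟩ := hexact
  have hsupp : ∀ i c, (A ^ (m * t)) i c ≠ 0 ↔ P c = P i := fun i c =>
    ⟨fun h => by simpa using eq_add_of_pow_apply_ne_zero hP' (m * t) h,
      fun h => (hpos i c h.symm).ne'⟩
  have hclass : ∀ i j k l, P k = P i → P l = P j → X k l = X i j := fun _ _ _ _ =>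
    apply_eq_of_class_eq (pow_mem hA _) (pow_mul_mul_transpose_pow hfix _) hsupp
  obtain ⟨i₀, j₀, hδ₀⟩ := exists_cdist_eq_of_indMat_ne_zero hδ
  have hXδ : ∀ i j, cdist P i j = δ → X i j = X i₀ j₀ := fun i j h =>
    apply_eq_of_cdist_eq hA hfix hsym hP' hclass (h.trans hδ₀.symm)
  have hc : trace (X * indMat P δ) / trace (indMat P δ * indMat P δ) = X i₀ j₀ :=
    (div_eq_iff (trace_indMat_mul_self_ne_zero hδ)).2 <|
      trace_mul_eq_mul_trace_mul_self (indMat_isSymm P δ) indMat_apply_mul_self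
        fun i j hij => hXδ i j (indMat_apply_ne_zero_iff.1 hij)
  intro i j
  by_cases h : cdist P i j = δ
  · rw [Matrix.sub_apply, Matrix.smul_apply, hc]
    simp [indMat, h, hXδ i j h]
  · simpa [indMat, h] using hXnn i j

/-- For an irreducible stochastic matrix `A` of exact period `t` with periodic
partition `P`, and a nonnegative symmetric solution `X` of `A X Aᵀ = X`, the
matrix `X - c X⁽δ⁾` with `c = tr(X X⁽δ⁾)/tr((X⁽δ⁾)²)` still has nonnegative
entries. -/
theorem level2_solution_sub_projection_nonneg {n t : ℕ} (ht : 1 ≤ t)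
    (A : Matrix (Fin n) (Fin n) ℝ)
    (hAnn : ∀ i j, 0 ≤ A i j) (hrow : ∀ i, ∑ j, A i j = 1)
    (hirr : ∀ i j, ∃ m : ℕ, 1 ≤ m ∧ 0 < (A ^ m) i j)
    (P : Fin n → ZMod t) (hPsurj : Function.Surjective P)
    (hP : ∀ i j, 0 < A i j → P j = P i + 1)
    (hexact : ∃ m : ℕ, 1 ≤ m ∧ ∀ i j, P i = P j → 0 < (A ^ (m * t)) i j)
    (X : Matrix (Fin n) (Fin n) ℝ) (hsym : X.IsSymm)
    (hXnn : ∀ i j, 0 ≤ X i j)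
    (hfix : A * X * Aᵀ = X)
    (δ : ℕ) (hδ : indMat P δ ≠ 0) :
    ∀ i j, 0 ≤ (X - (Matrix.trace (X * indMat P δ) /
      Matrix.trace (indMat P δ * indMat P δ)) • indMat P δ) i j :=
  level2_solution_sub_projection_nonneg_general ht A hAnn hrow P hP hexact X hsym hXnn hfix δ hδ
end

section
/- Let A be an n×n real stochastic matrix (all entries nonnegative, every row sums to 1) that is irreducible (for all i, j there exists m ≥ 1 with (A^m)_{ij} > 0) and periodic: there exist t ≥ 2 and a surjective map P : {1,…,n} → ℤ/tℤ such that A_{ij} > 0 implies P(j) = P(i) + 1. Then det(I − A^{(2)}) = 0, where A^{(2)} is the second induced matrix of A on ℝ^{C(n,2)}. -/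
/-!
Let `v (i, j)` be `1` when `i` and `j` lie in different classes of the periodic partition
and `0` otherwise. Since `v` is symmetric and vanishes on the diagonal, `A⁽²⁾` acts on it as
`A ⊗ A` does: `(A⁽²⁾ v)(i, j) = ∑ l m, A i l * A j m * v (l, m)`. Every nonzero term has
`P l = P i + 1` and `P m = P j + 1`, hence `v (l, m) = v (i, j)`, and the weights
`A i l * A j m` sum to `1`. So `v` is a fixed point of `A⁽²⁾`, and it is nonzero because `P`
takes at least two values.
-/

open Matrix BigOperators

/-- The second induced matrix `A⁽²⁾` of an `n×n` matrix `A`, acting on the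
space indexed by pairs `(i,j)` with `i < j`; its entries are the permanents of
the corresponding `2×2` submatrices of `A`. -/
def secondInduced {n : ℕ} (A : Matrix (Fin n) (Fin n) ℝ) :
    Matrix {p : Fin n × Fin n // p.1 < p.2} {p : Fin n × Fin n // p.1 < p.2} ℝ :=
  Matrix.of fun p q =>
    A p.1.1 q.1.1 * A p.1.2 q.1.2 + A p.1.1 q.1.2 * A p.1.2 q.1.1

theorem Fintype.sum_lt_pairs_add_swap {ι M : Type*} [Fintype ι] [LinearOrder ι]
    [AddCommMonoid M] (f : ι × ι → M) (hf : ∀ i, f (i, i) = 0) :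
    ∑ q : {p : ι × ι // p.1 < p.2}, (f q + f q.1.swap) = ∑ p, f p := by
  have hswap : ∑ q : {p : ι × ι // p.1 < p.2}, f q.1.swap
      = ∑ q : {p : ι × ι // p.2 < p.1}, f q :=
    Fintype.sum_equiv ((Equiv.prodComm ι ι).subtypeEquiv fun _ => Iff.rfl :
      {p : ι × ι // p.1 < p.2} ≃ {p : ι × ι // p.2 < p.1}) _ _ fun _ => rfl
  have hreversed : ∑ q : {p : ι × ι // p.2 < p.1}, f q
      = ∑ q : {p : ι × ι // ¬ p.1 < p.2}, f q := by
    rw [← Finset.sum_subtype {p | p.2 < p.1} (by simp),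
      ← Finset.sum_subtype {p | ¬ p.1 < p.2} (by simp)]
    refine Finset.sum_subset (fun p => by simpa using le_of_lt) fun p hle hlt => ?_
    obtain ⟨i, j⟩ := p
    obtain rfl : i = j := by simp_all [le_antisymm_iff]
    exact hf i
  rw [Finset.sum_add_distrib, hswap, hreversed, Fintype.sum_subtype_add_sum_subtype]

theorem secondInduced_mulVec_apply {n : ℕ} (A : Matrix (Fin n) (Fin n) ℝ)
    (w : Fin n × Fin n → ℝ) (hsymm : ∀ l m, w (l, m) = w (m, l)) (hdiag : ∀ l, w (l, l) = 0)
    (q : {p : Fin n × Fin n // p.1 < p.2}) :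
    (secondInduced A *ᵥ fun r => w r.1) q = ∑ l, ∑ m, A q.1.1 l * A q.1.2 m * w (l, m) := by
  rw [← Fintype.sum_prod_type',
    ← Fintype.sum_lt_pairs_add_swap _ fun l => by rw [hdiag, mul_zero]]
  refine Fintype.sum_congr _ _ fun r => ?_
  simp only [secondInduced, of_apply, Prod.fst_swap, Prod.snd_swap, ← hsymm]
  ring

section CrossClass

variable {ι G : Type*} [DecidableEq G]

def crossClassIndicator (P : ι → G) (p : ι × ι) : ℝ :=
  if P p.1 = P p.2 then 0 else 1

theorem crossClassIndicator_swap (P : ι → G) (l m : ι) :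
    crossClassIndicator P (l, m) = crossClassIndicator P (m, l) := by
  simp only [crossClassIndicator, eq_comm]

theorem crossClassIndicator_self (P : ι → G) (l : ι) : crossClassIndicator P (l, l) = 0 :=
  if_pos rfl

theorem crossClassIndicator_restrict_ne_zero [LinearOrder ι] {P : ι → G} {i j : ι}
    (h : P i ≠ P j) : (fun r : {p : ι × ι // p.1 < p.2} => crossClassIndicator P r.1) ≠ 0 := by
  intro h0
  rcases lt_or_gt_of_ne (ne_of_apply_ne P h) with hlt | hlt
  · simpa [crossClassIndicator, h] using congrFun h0 ⟨(i, j), hlt⟩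
  · simpa [crossClassIndicator, h.symm] using congrFun h0 ⟨(j, i), hlt⟩

theorem sum_mul_crossClassIndicator [Fintype ι] [Add G] [IsRightCancelAdd G]
    (A : Matrix ι ι ℝ) (hA : ∀ i j, 0 ≤ A i j) (hrow : ∀ i, ∑ j, A i j = 1) (P : ι → G)
    (c : G) (hP : ∀ i j, 0 < A i j → P j = P i + c) (i j : ι) :
    ∑ l, ∑ m, A i l * A j m * crossClassIndicator P (l, m) = crossClassIndicator P (i, j) := by
  have hshift : ∀ {k l}, A k l ≠ 0 → P l = P k + c := fun h => hP _ _ ((hA _ _).lt_of_ne' h)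
  have hterm : ∀ l m, A i l * A j m * crossClassIndicator P (l, m)
      = A i l * A j m * crossClassIndicator P (i, j) := by
    intro l m
    by_cases h : A i l * A j m = 0
    · rw [h, zero_mul, zero_mul]
    · obtain ⟨hl, hm⟩ := mul_ne_zero_iff.mp h
      simp only [crossClassIndicator, hshift hl, hshift hm, add_left_inj]
  calc ∑ l, ∑ m, A i l * A j m * crossClassIndicator P (l, m)
      = (∑ l, A i l) * (∑ m, A j m) * crossClassIndicator P (i, j) := by
        rw [Finset.sum_mul_sum, Finset.sum_mul]
        simp only [hterm, Finset.sum_mul]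
    _ = crossClassIndicator P (i, j) := by rw [hrow, hrow, one_mul, one_mul]

end CrossClass

theorem det_one_sub_secondInduced_eq_zero_general {n : ℕ}
    (A : Matrix (Fin n) (Fin n) ℝ)
    (hAnn : ∀ i j, 0 ≤ A i j) (hrow : ∀ i, ∑ j, A i j = 1)
    (t : ℕ) (ht : 2 ≤ t)
    (P : Fin n → ZMod t) (hPsurj : Function.Surjective P)
    (hP : ∀ i j, 0 < A i j → P j = P i + 1) :
    Matrix.det (1 - secondInduced A) = 0 := by
  have : Fact (1 < t) := ⟨ht⟩
  set v : {p : Fin n × Fin n // p.1 < p.2} → ℝ := fun r => crossClassIndicator P r.1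
  have hfixed : secondInduced A *ᵥ v = v := funext fun q => by
    rw [secondInduced_mulVec_apply A _ (crossClassIndicator_swap P) (crossClassIndicator_self P),
      sum_mul_crossClassIndicator A hAnn hrow P 1 hP]
  obtain ⟨i, hi⟩ := hPsurj 0
  obtain ⟨j, hj⟩ := hPsurj 1
  have hPij : P i ≠ P j := by rw [hi, hj]; exact zero_ne_one
  have hv : v ≠ 0 := crossClassIndicator_restrict_ne_zero hPij
  rw [← exists_mulVec_eq_zero_iff]
  exact ⟨v, hv, by rw [sub_mulVec, one_mulVec, hfixed, sub_self]⟩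

/-- If `A` is an irreducible stochastic matrix that is periodic (admitting a
surjective periodic partition `P : {1,…,n} → ℤ/tℤ` with `t ≥ 2`), then
`det(I - A⁽²⁾) = 0`. -/
theorem det_one_sub_secondInduced_eq_zero {n : ℕ}
    (A : Matrix (Fin n) (Fin n) ℝ)
    (hAnn : ∀ i j, 0 ≤ A i j) (hrow : ∀ i, ∑ j, A i j = 1)
    (hirr : ∀ i j, ∃ m : ℕ, 1 ≤ m ∧ 0 < (A ^ m) i j)
    (t : ℕ) (ht : 2 ≤ t)
    (P : Fin n → ZMod t) (hPsurj : Function.Surjective P)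
    (hP : ∀ i j, 0 < A i j → P j = P i + 1) :
    Matrix.det (1 - secondInduced A) = 0 :=
  det_one_sub_secondInduced_eq_zero_general A hAnn hrow t ht P hPsurj hP
end

section
/- Let A be an irreducible n×n real stochastic matrix (all entries nonnegative, every row sums to 1, and for all i, j there exists m ≥ 1 with (A^m)_{ij} > 0), and let π be a probability row vector (nonnegative entries summing to 1) with π A = π. If X is an n×n symmetric matrix with nonnegative entries satisfying A X Aᵀ = X, then the row vector π X is a constant multiple of the all-ones vector: there exists c ≥ 0 with Σ_i π_i X_{ij} = c for every j. -/
/-!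
Since `π A = π`, applying `π` to `A X Aᵀ = X` gives `(π X) Aᵀ = π X`, i.e. the column vector
`v = (π X)ᵀ` is harmonic for `A`: `A v = v`. A harmonic vector of a stochastic matrix is constant
along every positive entry leaving a maximum of `v`, and by irreducibility every index is reached
from the maximum by a positive entry of some power `A ^ m`, which is again stochastic and fixes `v`.
-/

open Matrix BigOperators

namespace Matrix

variable {ι R : Type*} [Fintype ι]

theorem mulVec_vecMul_eq_of_mul_mul_transpose_eq [CommSemiring R] {A X : Matrix ι ι R}
    {π : ι → R} (hπ : π ᵥ* A = π) (hX : A * X * Aᵀ = X) : A *ᵥ (π ᵥ* X) = π ᵥ* X :=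
  calc A *ᵥ (π ᵥ* X) = (π ᵥ* A) ᵥ* (X * Aᵀ) := by rw [hπ, ← vecMul_transpose, vecMul_vecMul]
    _ = π ᵥ* X := by rw [vecMul_vecMul, ← Matrix.mul_assoc, hX]

variable [DecidableEq ι]

theorem pow_mulVec_eq_self [Semiring R] {P : Matrix ι ι R} {v : ι → R} (hv : P *ᵥ v = v) :
    ∀ m : ℕ, P ^ m *ᵥ v = v
  | 0 => one_mulVec v
  | m + 1 => by rw [pow_succ, ← mulVec_mulVec, hv, pow_mulVec_eq_self hv m]

section MaximumPrinciple

variable [Ring R] [LinearOrder R] [IsStrictOrderedRing R]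

theorem apply_eq_of_mulVec_eq_of_forall_le {P : Matrix ι ι R} (hP : P ∈ rowStochastic R ι)
    {v : ι → R} (hv : P *ᵥ v = v) {i j : ι} (hmax : ∀ k, v k ≤ v i) (hij : 0 < P i j) :
    v j = v i := by
  refine le_antisymm (hmax j) (not_lt.1 fun hlt => ?_)
  have hdefect : ∑ k, P i k * (v i - v k) = 0 := by
    simp only [mul_sub, Finset.sum_sub_distrib, ← Finset.sum_mul,
      sum_row_of_mem_rowStochastic hP i, one_mul]
    exact sub_eq_zero.2 (congrFun hv i).symm
  have hpos : 0 < ∑ k, P i k * (v i - v k) :=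
    Finset.sum_pos' (fun k _ => mul_nonneg (hP.1 i k) (sub_nonneg.2 (hmax k)))
      ⟨j, Finset.mem_univ j, mul_pos hij (sub_pos.2 hlt)⟩
  exact hpos.ne' hdefect

theorem apply_eq_apply_of_mulVec_eq {P : Matrix ι ι R} (hP : P ∈ rowStochastic R ι)
    (hirr : ∀ i j, ∃ m : ℕ, 0 < (P ^ m) i j) {v : ι → R} (hv : P *ᵥ v = v) (i j : ι) :
    v i = v j := by
  have : Nonempty ι := ⟨i⟩
  obtain ⟨i₀, hi₀⟩ := Finite.exists_max v
  have hconst : ∀ k, v k = v i₀ := fun k => by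
    obtain ⟨m, hm⟩ := hirr i₀ k
    exact apply_eq_of_mulVec_eq_of_forall_le (pow_mem hP m) (pow_mulVec_eq_self hv m) hi₀ hm
  rw [hconst i, hconst j]

end MaximumPrinciple

end Matrix

theorem invariant_measure_level2_constant_general {n : ℕ}
    (A : Matrix (Fin n) (Fin n) ℝ)
    (hAnn : ∀ i j, 0 ≤ A i j) (hrow : ∀ i, ∑ j, A i j = 1)
    (hirr : ∀ i j, ∃ m : ℕ, 1 ≤ m ∧ 0 < (A ^ m) i j)
    (π : Fin n → ℝ) (hπnn : ∀ i, 0 ≤ π i)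
    (hπA : ∀ j, ∑ i, π i * A i j = π j)
    (X : Matrix (Fin n) (Fin n) ℝ)
    (hXnn : ∀ i j, 0 ≤ X i j)
    (hfix : A * X * Aᵀ = X) :
    ∃ c : ℝ, 0 ≤ c ∧ ∀ j, ∑ i, π i * X i j = c := by
  have hharm : A *ᵥ (π ᵥ* X) = π ᵥ* X :=
    mulVec_vecMul_eq_of_mul_mul_transpose_eq (funext hπA) hfix
  have hconst := apply_eq_apply_of_mulVec_eq (mem_rowStochastic_iff_sum.2 ⟨hAnn, hrow⟩)
    (fun i j => (hirr i j).imp fun _ => And.right) hharm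
  rcases isEmpty_or_nonempty (Fin n) with _ | ⟨⟨i⟩⟩
  · exact ⟨0, le_rfl, isEmptyElim⟩
  · have hnonneg : 0 ≤ ∑ k, π k * X k i :=
      Finset.sum_nonneg fun k _ => mul_nonneg (hπnn k) (hXnn k i)
    exact ⟨_, hnonneg, fun j => hconst j i⟩

/-- For an irreducible stochastic matrix `A` with invariant probability vector
`π`, and any nonnegative symmetric solution `X` of `A X Aᵀ = X`, the row
vector `π X` is a constant multiple of the all-ones vector. -/
theorem invariant_measure_level2_constant {n : ℕ}
    (A : Matrix (Fin n) (Fin n) ℝ)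
    (hAnn : ∀ i j, 0 ≤ A i j) (hrow : ∀ i, ∑ j, A i j = 1)
    (hirr : ∀ i j, ∃ m : ℕ, 1 ≤ m ∧ 0 < (A ^ m) i j)
    (π : Fin n → ℝ) (hπnn : ∀ i, 0 ≤ π i) (hπsum : ∑ i, π i = 1)
    (hπA : ∀ j, ∑ i, π i * A i j = π j)
    (X : Matrix (Fin n) (Fin n) ℝ) (hsym : X.IsSymm)
    (hXnn : ∀ i j, 0 ≤ X i j)
    (hfix : A * X * Aᵀ = X) :
    ∃ c : ℝ, 0 ≤ c ∧ ∀ j, ∑ i, π i * X i j = c :=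
  invariant_measure_level2_constant_general A hAnn hrow hirr π hπnn hπA X hXnn hfix
end
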